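/- Let u : ℝ → ℝ^k be a C² periodic function and f : ℝ × ℝ^k → ℝ^k continuous with f(t,x)•x > 0 whenever |x| ≥ M. If u satisfies ü(t) = λ f(t,u(t)) + (1-λ)u(t) for some λ ∈ [0,1], then max_t |u(t)| < M. -/

import Mathlib

/-!
At a maximum point `t₀` of `‖u‖` (which exists by periodicity) the second derivative of `‖u‖ ^ 2`,
namely `2 (‖u'‖ ^ 2 + ⟪u, u''⟫)`, is nonpositive, so `⟪u t₀, u'' t₀⟫ ≤ 0`. If `‖u t₀‖ ≥ M`, the
equation makes `⟪u, u''⟫ = λ ⟪f (t₀, u), u⟫ + (1 - λ) ‖u‖ ^ 2` a convex combination of two positive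
numbers.
-/

open Filter Topology

theorem Function.Periodic.exists_forall_le_of_continuous {α : Type*} [LinearOrder α]
    [TopologicalSpace α] [ClosedIciTopology α] {f : ℝ → α} {c : ℝ}
    (hp : Function.Periodic f c) (hc : c ≠ 0) (hf : Continuous f) :
    ∃ t₀, ∀ t, f t ≤ f t₀ := by
  obtain ⟨_, ⟨t₀, rfl⟩, hmax⟩ :=
    (hp.compact_of_continuous hc hf).exists_isGreatest (Set.range_nonempty f)
  exact ⟨t₀, fun t => hmax ⟨t, rfl⟩⟩

/-- Continuity at `x₀` excludes junk values of `deriv f`: `f = x ^ 2` off `0`, `f 0 = 1` has a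
local maximum at `0` and `deriv (deriv f) 0 = 2`. -/
theorem IsLocalMax.deriv_deriv_nonpos {f : ℝ → ℝ} {x₀ : ℝ} (hmax : IsLocalMax f x₀)
    (hc : ContinuousAt f x₀) : deriv (deriv f) x₀ ≤ 0 := by
  by_contra! hpos
  have hmin : IsLocalMin f x₀ := isLocalMin_of_deriv_deriv_pos hpos hmax.deriv_eq_zero hc
  have hconst : f =ᶠ[𝓝 x₀] fun _ => f x₀ := by
    filter_upwards [hmax, hmin] with x hle hge using le_antisymm hle hge
  have : deriv (deriv f) x₀ = 0 := by
    rw [hconst.deriv.deriv_eq, deriv_const', deriv_const]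
  exact hpos.ne' this

section InnerProductSpace

variable {E : Type*} [NormedAddCommGroup E] [InnerProductSpace ℝ E]

theorem deriv_norm_sq {u : ℝ → E} (hu : Differentiable ℝ u) :
    deriv (fun t => ‖u t‖ ^ 2) = fun t => 2 * inner ℝ (u t) (deriv u t) :=
  funext fun t => (hu t).hasDerivAt.norm_sq.deriv

theorem IsLocalMax.inner_deriv_deriv_nonpos {u : ℝ → E} {t₀ : ℝ} (hu : Differentiable ℝ u)
    (hu' : DifferentiableAt ℝ (deriv u) t₀) (hmax : IsLocalMax (fun t => ‖u t‖) t₀) :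
    inner ℝ (u t₀) (deriv (deriv u) t₀) ≤ 0 := by
  have hmax_sq : IsLocalMax (fun t => ‖u t‖ ^ 2) t₀ := by
    filter_upwards [hmax] with t ht using pow_le_pow_left₀ (norm_nonneg _) ht 2
  have hsecond : deriv (deriv fun t => ‖u t‖ ^ 2) t₀
      = 2 * (inner ℝ (u t₀) (deriv (deriv u) t₀) + inner ℝ (deriv u t₀) (deriv u t₀)) := by
    rw [deriv_norm_sq hu]
    exact (((hu t₀).hasDerivAt.inner ℝ hu'.hasDerivAt).const_mul 2).deriv
  have hnonpos := hmax_sq.deriv_deriv_nonpos ((hu t₀).continuousAt.norm.pow 2)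
  rw [hsecond] at hnonpos
  linarith [real_inner_self_nonneg (x := deriv u t₀)]

end InnerProductSpace

theorem nagumo_apriori_bound_general
    (k : ℕ) (u : ℝ → EuclideanSpace ℝ (Fin k))
    (f : ℝ → EuclideanSpace ℝ (Fin k) → EuclideanSpace ℝ (Fin k))
    (T M lam : ℝ) (hT : 0 < T)
    (hu : ContDiff ℝ 2 u) (hper : Function.Periodic u T)
    (hNagumo : ∀ t (x : EuclideanSpace ℝ (Fin k)), M ≤ ‖x‖ →
      (0:ℝ) < inner ℝ (f t x) x)
    (hlam : lam ∈ Set.Icc (0:ℝ) 1)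
    (hode : ∀ t, deriv (deriv u) t = lam • f t (u t) + (1 - lam) • u t) :
    ∀ t, ‖u t‖ < M := by
  have hu1 : Differentiable ℝ u := hu.differentiable two_ne_zero
  have hu2 : Differentiable ℝ (deriv u) := (hu.deriv' (n := 1)).differentiable one_ne_zero
  obtain ⟨t₀, ht₀⟩ := (hper.comp norm).exists_forall_le_of_continuous hT.ne' hu1.continuous.norm
  suffices ‖u t₀‖ < M from fun t => (ht₀ t).trans_lt this
  by_contra! hlarge
  have hf_pos : 0 < inner ℝ (f t₀ (u t₀)) (u t₀) := hNagumo t₀ (u t₀) hlarge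
  -- `u t₀ ≠ 0`, since `f t₀ (u t₀)` has positive inner product with it.
  have hu_pos : 0 < inner ℝ (u t₀) (u t₀) :=
    real_inner_self_pos.2 fun h => by simp [h] at hf_pos
  have hmax : IsLocalMax (fun t => ‖u t‖) t₀ := Eventually.of_forall ht₀
  have hnonpos := hmax.inner_deriv_deriv_nonpos hu1 (hu2 t₀)
  rw [hode, inner_add_right, real_inner_smul_right, real_inner_smul_right,
    real_inner_comm] at hnonpos
  nlinarith [mul_nonneg hlam.1 hf_pos.le, mul_nonneg (sub_nonneg.2 hlam.2) hu_pos.le,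
    mul_pos hf_pos hu_pos]

theorem nagumo_apriori_bound
    (k : ℕ) (u : ℝ → EuclideanSpace ℝ (Fin k))
    (f : ℝ → EuclideanSpace ℝ (Fin k) → EuclideanSpace ℝ (Fin k))
    (T M lam : ℝ) (hT : 0 < T) (hM : 0 < M)
    (hu : ContDiff ℝ 2 u) (hper : Function.Periodic u T)
    (hf : Continuous (fun p : ℝ × EuclideanSpace ℝ (Fin k) => f p.1 p.2))
    (hNagumo : ∀ t (x : EuclideanSpace ℝ (Fin k)), M ≤ ‖x‖ →
      (0:ℝ) < inner ℝ (f t x) x)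
    (hlam : lam ∈ Set.Icc (0:ℝ) 1)
    (hode : ∀ t, deriv (deriv u) t = lam • f t (u t) + (1 - lam) • u t) :
    ∀ t, ‖u t‖ < M :=
  nagumo_apriori_bound_general k u f T M lam hT hu hper hNagumo hlam hode
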